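/- arXiv:2205.06834 — 6 statements merged into one kernel-verified Lean document; each statement's English description precedes it below -/
import Mathlib

section
/- Consider the multi-variant SEIR system with M ≥ 1, total population N > 0, parameters μ ≥ 0, η_i ≥ 0, γ_i ≥ 0, continuous transmission rates β_i : [0,∞) → [0, β_max] and continuous vaccination rate ν : [0,∞) → [0, ν_max], and nonnegative initial conditions S₀, E₀, I_{1,0}, …, I_{M,0}, R₀ ≥ 0 satisfying S₀ + E₀ + Σ_{i=1}^M I_{i,0} + R₀ = N. Then the system has at least one solution defined on all of [0,∞): there exist differentiable functions S, E, I_1, …, I_M, R : [0,∞) → ℝ satisfying the system for every t ≥ 0 and taking the given initial values at t = 0. -/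
/-!
Clamping every compartment to `[0, N]` makes the SEIR vector field bounded and Lipschitz in the
state, uniformly in time because the rates range over a bounded set; Picard–Lindelöf on
intervals of every length, glued by uniqueness, then gives a global solution of the clamped
system. This solution stays in the simplex `{x ≥ 0, S + E + ∑ Iᵢ + R = N}`: each component has
nonnegative derivative where it vanishes, and the derivative of the total `T` has the sign of
`N - T` once the components are nonnegative. On the simplex the clamp is the identity, so the
clamped solution solves the original system. The rates are extended to negative times by
`t ↦ β (max t 0)`.
-/

open Set Metric Bornology Topology
open scoped NNReal

section ODE

variable {E : Type*} [NormedAddCommGroup E] [NormedSpace ℝ E]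

protected theorem HasDerivAt.fst {F : Type*} [NormedAddCommGroup F] [NormedSpace ℝ F]
    {f : ℝ → E × F} {f' : E × F} {t : ℝ} (h : HasDerivAt f f' t) :
    HasDerivAt (fun s => (f s).1) f'.1 t :=
  (hasFDerivAt_fst (p := f t)).comp_hasDerivAt t h

protected theorem HasDerivAt.snd {F : Type*} [NormedAddCommGroup F] [NormedSpace ℝ F]
    {f : ℝ → E × F} {f' : E × F} {t : ℝ} (h : HasDerivAt f f' t) :
    HasDerivAt (fun s => (f s).2) f'.2 t :=
  (hasFDerivAt_snd (p := f t)).comp_hasDerivAt t h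

variable [CompleteSpace E] {f : ℝ → E → E} {K : ℝ≥0} {C : ℝ}

theorem exists_eq_forall_mem_Ioo_hasDerivAt_of_lipschitzWith
    (hlip : ∀ t, LipschitzWith K (f t)) (hcont : ∀ x, Continuous (f · x))
    (hbdd : ∀ t x, ‖f t x‖ ≤ C) (t₀ : ℝ) (x₀ : E) (T : ℝ≥0) :
    ∃ X : ℝ → E, X t₀ = x₀ ∧ ∀ t ∈ Ioo (t₀ - T) (t₀ + T), HasDerivAt X (f t (X t)) t := by
  have hC : 0 ≤ C := (norm_nonneg _).trans (hbdd t₀ x₀)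
  have hPL : IsPicardLindelof f (tmin := t₀ - T) (tmax := t₀ + T) ⟨t₀, by simp⟩ x₀
      (C.toNNReal * T) 0 C.toNNReal K :=
    { lipschitzOnWith := fun t _ => (hlip t).lipschitzOnWith
      continuousOn := fun x _ => (hcont x).continuousOn
      norm_le := fun t _ x _ => by simpa [Real.coe_toNNReal _ hC] using hbdd t x
      mul_max_le := by simp }
  obtain ⟨X, hX₀, hX⟩ := hPL.exists_eq_forall_mem_Icc_hasDerivWithinAt₀
  exact ⟨X, hX₀, fun t ht => (hX t (Ioo_subset_Icc_self ht)).hasDerivAt (Icc_mem_nhds ht.1 ht.2)⟩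

theorem exists_eq_forall_hasDerivAt_of_lipschitzWith
    (hlip : ∀ t, LipschitzWith K (f t)) (hcont : ∀ x, Continuous (f · x))
    (hbdd : ∀ t x, ‖f t x‖ ≤ C) (t₀ : ℝ) (x₀ : E) :
    ∃ X : ℝ → E, X t₀ = x₀ ∧ ∀ t, HasDerivAt X (f t (X t)) t := by
  let I : ℕ → Set ℝ := fun n => Ioo (t₀ - (n + 1)) (t₀ + (n + 1))
  have I_mono : Monotone I := fun m n hmn => by
    have : (m : ℝ) ≤ n := by exact_mod_cast hmn
    exact Ioo_subset_Ioo (by linarith) (by linarith)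
  have mem_I : ∀ s, s ∈ I ⌈|s - t₀|⌉₊ := fun s => by
    have := Nat.le_ceil |s - t₀|
    constructor <;> linarith [neg_abs_le (s - t₀), le_abs_self (s - t₀)]
  choose sol hsol₀ hsol using fun n : ℕ =>
    exists_eq_forall_mem_Ioo_hasDerivAt_of_lipschitzWith hlip hcont hbdd t₀ x₀ (n + 1)
  replace hsol : ∀ n, ∀ t ∈ I n, HasDerivAt (sol n) (f t (sol n t)) t := by simpa [I] using hsol
  have agree : ∀ m n, EqOn (sol m) (sol n) (I (min m n)) := fun m n =>
    ODE_solution_unique_of_mem_Ioo (s := fun _ => univ) (fun t _ => (hlip t).lipschitzOnWith)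
      (I_mono (Nat.zero_le _) (by simpa using mem_I t₀))
      (fun t ht => ⟨hsol m t (I_mono (min_le_left m n) ht), trivial⟩)
      (fun t ht => ⟨hsol n t (I_mono (min_le_right m n) ht), trivial⟩) (by rw [hsol₀, hsol₀])
  refine ⟨fun s => sol ⌈|s - t₀|⌉₊ s, hsol₀ _, fun t => ?_⟩
  have heq : (fun s => sol ⌈|s - t₀|⌉₊ s) =ᶠ[𝓝 t] sol ⌈|t - t₀|⌉₊ := by
    filter_upwards [isOpen_Ioo.mem_nhds (mem_I t)] with s hs
    refine agree _ _ ?_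
    rcases min_choice ⌈|s - t₀|⌉₊ ⌈|t - t₀|⌉₊ with h | h <;> rw [h]
    exacts [mem_I s, hs]
  show HasDerivAt _ (f t (sol ⌈|t - t₀|⌉₊ t)) t
  exact (hsol _ t (mem_I t)).congr_of_eventuallyEq heq

variable {P : Type*} [PseudoMetricSpace P] [ProperSpace P] [ProperSpace E]

theorem exists_eq_forall_hasDerivAt_of_locallyLipschitz {G : P × E → E}
    (hG : LocallyLipschitz G) {p : ℝ → P} (hp : Continuous p) (hpb : IsBounded (range p))
    {c : E → E} (hc : LipschitzWith K c) (hcb : IsBounded (range c)) (t₀ : ℝ) (x₀ : E) :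
    ∃ X : ℝ → E, X t₀ = x₀ ∧ ∀ t, HasDerivAt X (G (p t, c (X t))) t := by
  set s := closure (range p) ×ˢ closure (range c)
  have hs : IsCompact s := hpb.isCompact_closure.prod hcb.isCompact_closure
  have mem_s : ∀ t x, (p t, c x) ∈ s := fun t x =>
    ⟨subset_closure (mem_range_self t), subset_closure (mem_range_self x)⟩
  obtain ⟨L, hL⟩ := hG.locallyLipschitzOn.exists_lipschitzOnWith_of_compact hs
  obtain ⟨C, hC⟩ := hs.exists_bound_of_continuousOn hG.continuous.continuousOn
  refine exists_eq_forall_hasDerivAt_of_lipschitzWith (f := fun t x => G (p t, c x))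
    (K := L * K) (fun t => ?_)
    (fun x => hG.continuous.comp (hp.prodMk continuous_const)) (fun t x => hC _ (mem_s t x)) t₀ x₀
  have hpc : LipschitzWith K fun x => (p t, c x) := by
    simpa [Function.comp_def] using (LipschitzWith.prodMk_left (p t)).comp hc
  exact lipschitzOnWith_univ.mp (hL.comp hpc.lipschitzOnWith fun x _ => mem_s t x)

end ODE

theorem nonneg_of_hasDerivAt_of_nonneg_of_neg {u u' : ℝ → ℝ} {a : ℝ}
    (hu : ∀ t ≥ a, HasDerivAt u (u' t) t) (ha : 0 ≤ u a) (h : ∀ t ≥ a, u t < 0 → 0 ≤ u' t) :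
    ∀ t ≥ a, 0 ≤ u t := by
  intro t ht
  by_contra! hneg
  -- the barrier `ε (1 + (x - a))` makes the derivative bound strict, as the fence theorem needs
  have hlen : 0 < 1 + (t - a) := by linarith
  set ε := -u t / (2 * (1 + (t - a)))
  have hε : 0 < ε := div_pos (by linarith) (by linarith)
  have key := image_le_of_deriv_right_lt_deriv_boundary (f := fun x => -u x)
    (f' := fun x => -u' x) (B := fun x => ε * (1 + (x - a))) (B' := fun _ => ε)
    (fun x hx => (hu x hx.1).continuousAt.continuousWithinAt.neg)
    (fun x hx => (hu x hx.1).neg.hasDerivWithinAt) (by rw [sub_self, add_zero, mul_one]; linarith)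
    (fun x => by simpa using (((hasDerivAt_id x).sub_const a).const_add 1).const_mul ε)
    (fun x hx hx' => by
      have : u x < 0 := by linarith [mul_pos hε (by linarith [hx.1] : 0 < 1 + (x - a))]
      linarith [h x hx.1 this])
    ⟨ht, le_rfl⟩
  have : ε * (1 + (t - a)) = -u t / 2 := by
    simp only [ε]; field_simp
  linarith

noncomputable def clamp (N x : ℝ) : ℝ := max 0 (min x N)

section Clamp

variable {N x y : ℝ}

theorem clamp_nonneg : 0 ≤ clamp N x := le_max_left _ _

theorem clamp_le (hN : 0 ≤ N) : clamp N x ≤ N := max_le hN (min_le_right _ _)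

theorem clamp_le_self (hx : 0 ≤ x) : clamp N x ≤ x := max_le hx (min_le_left _ _)

theorem clamp_of_nonpos (hx : x ≤ 0) : clamp N x = 0 := max_eq_left ((min_le_left _ _).trans hx)

theorem clamp_of_le (hN : 0 ≤ N) (hx : N ≤ x) : clamp N x = N := by
  rw [clamp, min_eq_right hx, max_eq_right hN]

theorem clamp_of_mem_Icc (hx : x ∈ Icc 0 N) : clamp N x = x := by
  rw [clamp, min_eq_left hx.2, max_eq_right hx.1]

theorem clamp_add_le : clamp N (x + y) ≤ clamp N x + clamp N y := by
  simp only [clamp]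
  grind

theorem lipschitzWith_clamp (N : ℝ) : LipschitzWith 1 (clamp N) :=
  (LipschitzWith.id.min_const N).const_max 0

theorem dist_clamp_le : dist (clamp N x) (clamp N y) ≤ dist x y := by
  simpa using (lipschitzWith_clamp N).dist_le_mul x y

end Clamp

/-- The state `(S, E, I, R)`. -/
abbrev SEIRState (M : ℕ) := ℝ × ℝ × (Fin M → ℝ) × ℝ

namespace SEIRState

variable {M : ℕ} {N : ℝ}

def total (y : SEIRState M) : ℝ := y.1 + y.2.1 + ∑ i, y.2.2.1 i + y.2.2.2

noncomputable def clamp (N : ℝ) (y : SEIRState M) : SEIRState M :=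
  (_root_.clamp N y.1, _root_.clamp N y.2.1, fun i => _root_.clamp N (y.2.2.1 i),
    _root_.clamp N y.2.2.2)

theorem nonneg_iff {y : SEIRState M} :
    0 ≤ y ↔ 0 ≤ y.1 ∧ 0 ≤ y.2.1 ∧ (∀ i, 0 ≤ y.2.2.1 i) ∧ 0 ≤ y.2.2.2 := by
  simp [Prod.le_def, Pi.le_def]

theorem clamp_nonneg (y : SEIRState M) : 0 ≤ clamp N y :=
  nonneg_iff.2 ⟨_root_.clamp_nonneg, _root_.clamp_nonneg, fun _ => _root_.clamp_nonneg,
    _root_.clamp_nonneg⟩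

theorem lipschitzWith_clamp (N : ℝ) : LipschitzWith 1 (clamp N : SEIRState M → SEIRState M) := by
  refine LipschitzWith.mk_one fun x y => ?_
  simp only [clamp, Prod.dist_eq]
  exact max_le_max dist_clamp_le (max_le_max dist_clamp_le (max_le_max
    ((dist_pi_le_iff dist_nonneg).2 fun i => dist_clamp_le.trans (dist_le_pi_dist _ _ i))
    dist_clamp_le))

theorem isBounded_range_clamp (hN : 0 ≤ N) :
    IsBounded (range (clamp N : SEIRState M → SEIRState M)) :=
  (isBounded_Icc 0 (N, N, fun _ => N, N)).subset <| range_subset_iff.2 fun y =>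
    ⟨clamp_nonneg y, by simp [clamp, Prod.le_def, Pi.le_def, clamp_le hN]⟩

theorem clamp_total_le (y : SEIRState M) : _root_.clamp N (total y) ≤ total (clamp N y) := by
  have hI := Finset.le_sum_of_subadditive (_root_.clamp N) (clamp_of_nonpos le_rfl).le
    (fun _ _ => clamp_add_le) Finset.univ y.2.2.1
  calc _ ≤ _root_.clamp N y.1 + _root_.clamp N y.2.1 + _root_.clamp N (∑ i, y.2.2.1 i) +
        _root_.clamp N y.2.2.2 := by
        grw [total, clamp_add_le, clamp_add_le, clamp_add_le]
    _ ≤ total (clamp N y) := by grw [hI]; rfl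

theorem total_clamp_le {y : SEIRState M} (hy : 0 ≤ y) : total (clamp N y) ≤ total y := by
  obtain ⟨hS, hE, hI, hR⟩ := nonneg_iff.1 hy
  simp only [total, clamp]
  gcongr with i
  exacts [clamp_le_self hS, clamp_le_self hE, clamp_le_self (hI i), clamp_le_self hR]

theorem clamp_eq_self {y : SEIRState M} (hy : 0 ≤ y) (h : total y = N) : clamp N y = y := by
  obtain ⟨hS, hE, hI, hR⟩ := nonneg_iff.1 hy
  have hIsum : 0 ≤ ∑ i, y.2.2.1 i := Finset.sum_nonneg fun i _ => hI i
  have hIle : ∀ i, y.2.2.1 i ≤ ∑ j, y.2.2.1 j := fun i =>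
    Finset.single_le_sum (fun j _ => hI j) (Finset.mem_univ i)
  simp only [total] at h
  refine Prod.ext ?_ (Prod.ext ?_ (Prod.ext (funext fun i => ?_) ?_))
  · exact clamp_of_mem_Icc ⟨hS, by linarith⟩
  · exact clamp_of_mem_Icc ⟨hE, by linarith⟩
  · exact clamp_of_mem_Icc ⟨hI i, by linarith [hIle i]⟩
  · exact clamp_of_mem_Icc ⟨hR, by linarith⟩

theorem hasDerivAt_total {X : ℝ → SEIRState M} {y' : SEIRState M} {t : ℝ}
    (h : HasDerivAt X y' t) : HasDerivAt (fun s => total (X s)) (total y') t :=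
  ((h.fst.add h.snd.fst).add (HasDerivAt.fun_sum fun i _ => hasDerivAt_pi.1 h.snd.snd.fst i)).add
    h.snd.snd.snd

theorem nonneg_of_hasDerivAt {X Y : ℝ → SEIRState M} (hX : ∀ t, HasDerivAt X (Y t) t)
    (h₀ : 0 ≤ X 0)
    (hS : ∀ t ≥ 0, (X t).1 < 0 → 0 ≤ (Y t).1) (hE : ∀ t ≥ 0, (X t).2.1 < 0 → 0 ≤ (Y t).2.1)
    (hI : ∀ i, ∀ t ≥ 0, (X t).2.2.1 i < 0 → 0 ≤ (Y t).2.2.1 i)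
    (hR : ∀ t ≥ 0, (X t).2.2.2 < 0 → 0 ≤ (Y t).2.2.2) :
    ∀ t ≥ 0, 0 ≤ X t := by
  obtain ⟨hS₀, hE₀, hI₀, hR₀⟩ := nonneg_iff.1 h₀
  intro t ht
  refine nonneg_iff.2 ⟨?_, ?_, fun i => ?_, ?_⟩
  · exact nonneg_of_hasDerivAt_of_nonneg_of_neg (fun s _ => (hX s).fst) hS₀ hS t ht
  · exact nonneg_of_hasDerivAt_of_nonneg_of_neg (fun s _ => (hX s).snd.fst) hE₀ hE t ht
  · exact nonneg_of_hasDerivAt_of_nonneg_of_neg (fun s _ => hasDerivAt_pi.1 (hX s).snd.snd.fst i)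
      (hI₀ i) (hI i) t ht
  · exact nonneg_of_hasDerivAt_of_nonneg_of_neg (fun s _ => (hX s).snd.snd.snd) hR₀ hR t ht

end SEIRState

section SEIRField

variable {M : ℕ} (N μ : ℝ) (η γ : Fin M → ℝ)

noncomputable def seirField (b : Fin M → ℝ) (v : ℝ) (y : SEIRState M) : SEIRState M :=
  (μ * N - y.1 / N * (∑ i, b i * y.2.2.1 i) - (v + μ) * y.1,
    y.1 / N * (∑ i, b i * y.2.2.1 i) - ((∑ i, η i) + μ) * y.2.1,
    fun i => η i * y.2.1 - (γ i + μ) * y.2.2.1 i,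
    (∑ i, γ i * y.2.2.1 i) + v * y.1 - μ * y.2.2.2)

theorem contDiff_seirField :
    ContDiff ℝ 1 fun q : ((Fin M → ℝ) × ℝ) × SEIRState M =>
      seirField N μ η γ q.1.1 q.1.2 q.2 := by
  unfold seirField
  fun_prop

theorem total_seirField (b : Fin M → ℝ) (v : ℝ) (y : SEIRState M) :
    SEIRState.total (seirField N μ η γ b v y) = μ * (N - SEIRState.total y) := by
  simp only [seirField, SEIRState.total, Finset.sum_sub_distrib, ← Finset.sum_mul, add_mul,
    Finset.sum_add_distrib, ← Finset.mul_sum]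
  ring

variable {N μ η γ}

theorem seirField_nonneg_of_eq_zero (hN : 0 ≤ N) (hμ : 0 ≤ μ) (hη : ∀ i, 0 ≤ η i)
    (hγ : ∀ i, 0 ≤ γ i) {b : Fin M → ℝ} {v : ℝ} (hb : 0 ≤ b) (hv : 0 ≤ v) {y : SEIRState M}
    (hy : 0 ≤ y) :
    (y.1 = 0 → 0 ≤ (seirField N μ η γ b v y).1) ∧
    (y.2.1 = 0 → 0 ≤ (seirField N μ η γ b v y).2.1) ∧
    (∀ i, y.2.2.1 i = 0 → 0 ≤ (seirField N μ η γ b v y).2.2.1 i) ∧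
    (y.2.2.2 = 0 → 0 ≤ (seirField N μ η γ b v y).2.2.2) := by
  obtain ⟨hS, hE, hI, hR⟩ := SEIRState.nonneg_iff.1 hy
  have hinc : 0 ≤ y.1 / N * ∑ i, b i * y.2.2.1 i :=
    mul_nonneg (div_nonneg hS hN) (Finset.sum_nonneg fun i _ => mul_nonneg (hb i) (hI i))
  simp only [seirField]
  refine ⟨fun h => ?_, fun h => ?_, fun i h => ?_, fun h => ?_⟩ <;> rw [h]
  · simpa using mul_nonneg hμ hN
  · simpa using hinc
  · simpa using mul_nonneg (hη i) hE
  · simpa using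
      add_nonneg (Finset.sum_nonneg fun i _ => mul_nonneg (hγ i) (hI i)) (mul_nonneg hv hS)

end SEIRField

section Solution

variable {M : ℕ} {N μ : ℝ} {η γ : Fin M → ℝ} {b : ℝ → Fin M → ℝ} {v : ℝ → ℝ}

open SEIRState in
theorem total_eq_of_hasDerivAt_seirField_clamp (hN : 0 ≤ N) (hμ : 0 ≤ μ) {X : ℝ → SEIRState M}
    (hX : ∀ t, HasDerivAt X (seirField N μ η γ (b t) (v t) (clamp N (X t))) t)
    (hnonneg : ∀ t ≥ 0, 0 ≤ X t) (h₀ : total (X 0) = N) :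
    ∀ t ≥ 0, total (X t) = N := by
  have hderiv : ∀ t, HasDerivAt (fun s => total (X s)) (μ * (N - total (clamp N (X t)))) t :=
    fun t => by simpa only [total_seirField] using hasDerivAt_total (hX t)
  have hle := nonneg_of_hasDerivAt_of_nonneg_of_neg (a := 0) (fun t _ => (hderiv t).sub_const N)
    (by simp [h₀]) fun t ht h =>
      mul_nonneg hμ (by linarith [total_clamp_le (N := N) (hnonneg t ht)])
  have hge := nonneg_of_hasDerivAt_of_nonneg_of_neg (a := 0) (fun t _ => (hderiv t).const_sub N)
    (by simp [h₀]) fun t _ h => by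
      have := clamp_total_le (N := N) (X t)
      rw [clamp_of_le hN (by linarith)] at this
      exact neg_nonneg.2 (mul_nonpos_of_nonneg_of_nonpos hμ (by linarith))
  exact fun t ht => le_antisymm (by linarith [hge t ht]) (by linarith [hle t ht])

theorem exists_eq_forall_hasDerivAt_seirField (hN : 0 ≤ N) (hμ : 0 ≤ μ) (hη : ∀ i, 0 ≤ η i)
    (hγ : ∀ i, 0 ≤ γ i) (hbc : Continuous b) (hvc : Continuous v) (hb : ∀ t, 0 ≤ b t)
    (hv : ∀ t, 0 ≤ v t) (hbb : IsBounded (range b)) (hvb : IsBounded (range v))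
    {y₀ : SEIRState M} (hy₀ : 0 ≤ y₀) (hy₀N : SEIRState.total y₀ = N) :
    ∃ X : ℝ → SEIRState M, X 0 = y₀ ∧
      ∀ t ≥ 0, HasDerivAt X (seirField N μ η γ (b t) (v t) (X t)) t := by
  obtain ⟨X, hX₀, hX⟩ := exists_eq_forall_hasDerivAt_of_locallyLipschitz
    (contDiff_seirField N μ η γ).locallyLipschitz (hbc.prodMk hvc)
    ((hbb.prod hvb).subset (range_subset_iff.2 fun t => ⟨mem_range_self t, mem_range_self t⟩))
    (SEIRState.lipschitzWith_clamp N) (SEIRState.isBounded_range_clamp hN) 0 y₀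
  have hpos := fun t => seirField_nonneg_of_eq_zero hN hμ hη hγ (hb t) (hv t)
    (SEIRState.clamp_nonneg (N := N) (X t))
  have hnonneg : ∀ t ≥ 0, 0 ≤ X t := SEIRState.nonneg_of_hasDerivAt hX (hX₀ ▸ hy₀)
    (fun t _ h => (hpos t).1 (clamp_of_nonpos h.le))
    (fun t _ h => (hpos t).2.1 (clamp_of_nonpos h.le))
    (fun i t _ h => (hpos t).2.2.1 i (clamp_of_nonpos h.le))
    (fun t _ h => (hpos t).2.2.2 (clamp_of_nonpos h.le))
  have htotal := total_eq_of_hasDerivAt_seirField_clamp hN hμ hX hnonneg (hX₀ ▸ hy₀N)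
  refine ⟨X, hX₀, fun t ht => ?_⟩
  simpa [SEIRState.clamp_eq_self (hnonneg t ht) (htotal t ht)] using hX t

end Solution

theorem seir_global_existence_general
    (M : ℕ) (N μ βmax νmax : ℝ) (hN : 0 < N) (hμ : 0 ≤ μ)
    (ηv γ : Fin M → ℝ) (hηv : ∀ i, 0 ≤ ηv i) (hγ : ∀ i, 0 ≤ γ i)
    (β : Fin M → ℝ → ℝ) (ν : ℝ → ℝ)
    (hβc : ∀ i, ContinuousOn (β i) (Set.Ici 0))
    (hβb : ∀ i, ∀ t ≥ (0:ℝ), β i t ∈ Set.Icc 0 βmax)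
    (hνc : ContinuousOn ν (Set.Ici 0))
    (hνb : ∀ t ≥ (0:ℝ), ν t ∈ Set.Icc 0 νmax)
    (S₀ E₀ R₀ : ℝ) (I₀ : Fin M → ℝ)
    (hS₀ : 0 ≤ S₀) (hE₀ : 0 ≤ E₀) (hI₀ : ∀ i, 0 ≤ I₀ i) (hR₀ : 0 ≤ R₀)
    (hsum : S₀ + E₀ + (∑ i, I₀ i) + R₀ = N) :
    ∃ (S E R : ℝ → ℝ) (I : Fin M → ℝ → ℝ),
      S 0 = S₀ ∧ E 0 = E₀ ∧ (∀ i, I i 0 = I₀ i) ∧ R 0 = R₀ ∧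
      ∀ t ≥ (0:ℝ),
        HasDerivAt S (μ * N - S t / N * (∑ i, β i t * I i t) - (ν t + μ) * S t) t ∧
        HasDerivAt E (S t / N * (∑ i, β i t * I i t) - ((∑ i, ηv i) + μ) * E t) t ∧
        (∀ i, HasDerivAt (I i) (ηv i * E t - (γ i + μ) * I i t) t) ∧
        HasDerivAt R ((∑ i, γ i * I i t) + ν t * S t - μ * R t) t := by
  have hmax : Continuous fun t : ℝ => max t 0 := continuous_id.max continuous_const
  obtain ⟨X, hX₀, hX⟩ := exists_eq_forall_hasDerivAt_seirField (b := fun t i => β i (max t 0))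
    (v := fun t => ν (max t 0)) hN.le hμ hηv hγ
    (continuous_pi fun i => (hβc i).comp_continuous hmax fun t => le_max_right t 0)
    (hνc.comp_continuous hmax fun t => le_max_right t 0)
    (fun t i => (hβb i _ (le_max_right t 0)).1) (fun t => (hνb _ (le_max_right t 0)).1)
    ((isBounded_Icc 0 fun _ => βmax).subset (range_subset_iff.2 fun t =>
      ⟨fun i => (hβb i _ (le_max_right t 0)).1, fun i => (hβb i _ (le_max_right t 0)).2⟩))
    ((isBounded_Icc 0 νmax).subset (range_subset_iff.2 fun t => hνb _ (le_max_right t 0)))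
    (y₀ := (S₀, E₀, I₀, R₀)) (SEIRState.nonneg_iff.2 ⟨hS₀, hE₀, hI₀, hR₀⟩) hsum
  refine ⟨fun t => (X t).1, fun t => (X t).2.1, fun t => (X t).2.2.2, fun i t => (X t).2.2.1 i,
    by simp [hX₀], by simp [hX₀], fun i => by simp [hX₀], by simp [hX₀], fun t ht => ?_⟩
  have h := hX t ht
  simp only [max_eq_left ht] at h
  exact ⟨h.fst, h.snd.fst, fun i => hasDerivAt_pi.1 h.snd.snd.fst i, h.snd.snd.snd⟩

/-- Global existence of a solution of the multi-variant SEIR system on `[0, ∞)`. -/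
theorem seir_global_existence
    (M : ℕ) (hM : 1 ≤ M) (N μ βmax νmax : ℝ) (hN : 0 < N) (hμ : 0 ≤ μ)
    (hβmax : 0 ≤ βmax) (hνmax : 0 ≤ νmax)
    (ηv γ : Fin M → ℝ) (hηv : ∀ i, 0 ≤ ηv i) (hγ : ∀ i, 0 ≤ γ i)
    (β : Fin M → ℝ → ℝ) (ν : ℝ → ℝ)
    (hβc : ∀ i, ContinuousOn (β i) (Set.Ici 0))
    (hβb : ∀ i, ∀ t ≥ (0:ℝ), β i t ∈ Set.Icc 0 βmax)
    (hνc : ContinuousOn ν (Set.Ici 0))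
    (hνb : ∀ t ≥ (0:ℝ), ν t ∈ Set.Icc 0 νmax)
    (S₀ E₀ R₀ : ℝ) (I₀ : Fin M → ℝ)
    (hS₀ : 0 ≤ S₀) (hE₀ : 0 ≤ E₀) (hI₀ : ∀ i, 0 ≤ I₀ i) (hR₀ : 0 ≤ R₀)
    (hsum : S₀ + E₀ + (∑ i, I₀ i) + R₀ = N) :
    ∃ (S E R : ℝ → ℝ) (I : Fin M → ℝ → ℝ),
      S 0 = S₀ ∧ E 0 = E₀ ∧ (∀ i, I i 0 = I₀ i) ∧ R 0 = R₀ ∧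
      ∀ t ≥ (0:ℝ),
        HasDerivAt S (μ * N - S t / N * (∑ i, β i t * I i t) - (ν t + μ) * S t) t ∧
        HasDerivAt E (S t / N * (∑ i, β i t * I i t) - ((∑ i, ηv i) + μ) * E t) t ∧
        (∀ i, HasDerivAt (I i) (ηv i * E t - (γ i + μ) * I i t) t) ∧
        HasDerivAt R ((∑ i, γ i * I i t) + ν t * S t - μ * R t) t :=
  seir_global_existence_general M N μ βmax νmax hN hμ ηv γ hηv hγ β ν hβc hβb hνc hνb S₀ E₀ R₀ I₀
    hS₀ hE₀ hI₀ hR₀ hsum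
end

section
/- Let F be the (M+1) × (M+1) real matrix whose first row is (0, β_1⁰, β_2⁰, …, β_M⁰) and all other entries are zero, and let V be the (M+1) × (M+1) real matrix with first row (η+μ, 0, …, 0), first column (η+μ, −η_1, …, −η_M)ᵀ, diagonal entries V_{i+1,i+1} = γ_i + μ for i = 1,…,M, and all other entries zero. Assume η + μ > 0 and γ_i + μ > 0 for all i. Then the characteristic polynomial of the next-generation matrix F·V⁻¹ equals X^M · (X − ℛ₀), where ℛ₀ = Σ_{i=1}^M β_i⁰ η_i / ((γ_i + μ)(η + μ)). In particular, the eigenvalues of F·V⁻¹ are 0 (with multiplicity M) and ℛ₀. -/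
open Polynomial

/-! `F = e₀ bᵀ` has rank one, hence so has `F V⁻¹ = e₀ (bᵀ V⁻¹)`, and the characteristic
polynomial of a rank-one matrix `u vᵀ` is `X ^ M * (X - vᵀ u)`. Here `vᵀ u = bᵀ w` with `w` the
first column of `V⁻¹`, which is read off by solving the lower-triangular system `V w = e₀`. -/

namespace Matrix

variable {R : Type*}

theorem eq_vecMulVec_of_row_succ_eq_zero [MulZeroOneClass R] {n : ℕ}
    {A : Matrix (Fin (n + 1)) (Fin (n + 1)) R} (h : ∀ (i : Fin n) j, A i.succ j = 0) :
    A = vecMulVec (Pi.single 0 1) (A 0) := by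
  ext i j
  rw [vecMulVec_apply]
  cases i using Fin.cases <;> simp [h]

theorem charpoly_of_row_succ_eq_zero [CommRing R] {n : ℕ}
    {A : Matrix (Fin (n + 1)) (Fin (n + 1)) R} (h : ∀ (i : Fin n) j, A i.succ j = 0) :
    A.charpoly = X ^ n * (X - C (A 0 0)) := by
  rw [eq_vecMulVec_of_row_succ_eq_zero h, charpoly_vecMulVec, single_one_dotProduct]
  simp only [Fintype.card_fin, Nat.add_sub_cancel, smul_eq_C_mul, vecMulVec_apply,
    Pi.single_eq_same, one_mul]
  ring

theorem isLowerTriangular_of_row_zero_of_offDiag [Zero R] {n : ℕ}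
    {V : Matrix (Fin (n + 1)) (Fin (n + 1)) R} (h0 : ∀ j : Fin n, V 0 j.succ = 0)
    (hoff : ∀ i j : Fin n, i ≠ j → V i.succ j.succ = 0) : V.IsLowerTriangular := by
  intro i j hij
  obtain ⟨j, rfl⟩ := Fin.exists_succ_eq.mpr (Fin.ne_zero_of_lt (show i < j from hij))
  cases i using Fin.cases with
  | zero => exact h0 j
  | succ i => exact hoff i j (fun h => (h ▸ hij).false)

theorem isUnit_det_of_isLowerTriangular [Field R] {m : Type*} [Fintype m] [DecidableEq m]
    [LinearOrder m] {V : Matrix m m R} (hV : V.IsLowerTriangular) (hd : ∀ i, V i i ≠ 0) :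
    IsUnit V.det := by
  rw [det_of_isLowerTriangular V hV, isUnit_iff_ne_zero]
  exact Finset.prod_ne_zero_iff.mpr fun i _ => hd i

theorem inv_apply_of_mulVec_eq_single [CommRing R] {m : Type*} [Fintype m] [DecidableEq m]
    {V : Matrix m m R} (hV : IsUnit V.det) {w : m → R} {j : m} (h : V *ᵥ w = Pi.single j 1)
    (i : m) : V⁻¹ i j = w i := by
  have := V.invertibleOfIsUnitDet hV
  rw [← inv_mulVec_eq_vec h.symm, mulVec_single_one, col_apply]

theorem inv_apply_succ_zero_of_arrowhead [Field R] {n : ℕ}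
    {V : Matrix (Fin (n + 1)) (Fin (n + 1)) R} {a : R} {c d : Fin n → R} (ha : a ≠ 0)
    (hd : ∀ i, d i ≠ 0) (h00 : V 0 0 = a) (h0 : ∀ j : Fin n, V 0 j.succ = 0)
    (hcol : ∀ i : Fin n, V i.succ 0 = -c i)
    (hdiag : ∀ i : Fin n, V i.succ i.succ = d i)
    (hoff : ∀ i j : Fin n, i ≠ j → V i.succ j.succ = 0) (i : Fin n) :
    V⁻¹ i.succ 0 = c i / (d i * a) := by
  have hV : IsUnit V.det :=
    isUnit_det_of_isLowerTriangular (isLowerTriangular_of_row_zero_of_offDiag h0 hoff)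
      (Fin.cases (h00 ▸ ha) fun i => hdiag i ▸ hd i)
  have hw : V *ᵥ Fin.cons a⁻¹ (fun i => c i / (d i * a)) = Pi.single 0 1 := by
    funext k
    rw [mulVec, dotProduct, Fin.sum_univ_succ]
    cases k using Fin.cases with
    | zero => simp [h00, h0, ha]
    | succ k =>
      rw [Finset.sum_eq_single k (fun j _ hj => by rw [hoff k j (Ne.symm hj), zero_mul])
        (by simp),
        Pi.single_eq_of_ne (Fin.succ_ne_zero k), hcol, hdiag, Fin.cons_zero, Fin.cons_succ]
      field_simp [hd k]
      ring
  exact inv_apply_of_mulVec_eq_single hV hw i.succ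

end Matrix

open Matrix

theorem next_generation_charpoly_general
    (M : ℕ) (μ η : ℝ)
    (β0 ηv γ : Fin M → ℝ)
    (hημ : 0 < η + μ) (hγμ : ∀ i, 0 < γ i + μ)
    (F V : Matrix (Fin (M + 1)) (Fin (M + 1)) ℝ)
    (hF00 : F 0 0 = 0)
    (hF0row : ∀ j : Fin M, F 0 j.succ = β0 j)
    (hFrest : ∀ (i : Fin M) (j : Fin (M + 1)), F i.succ j = 0)
    (hV00 : V 0 0 = η + μ)
    (hV0row : ∀ j : Fin M, V 0 j.succ = 0)
    (hVcol : ∀ i : Fin M, V i.succ 0 = -ηv i)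
    (hVdiag : ∀ i : Fin M, V i.succ i.succ = γ i + μ)
    (hVoff : ∀ i j : Fin M, i ≠ j → V i.succ j.succ = 0) :
    (F * V⁻¹).charpoly =
      X ^ M * (X - C (∑ i, β0 i * ηv i / ((γ i + μ) * (η + μ)))) := by
  have hVinv : ∀ i : Fin M, V⁻¹ i.succ 0 = ηv i / ((γ i + μ) * (η + μ)) :=
    inv_apply_succ_zero_of_arrowhead hημ.ne' (fun i => (hγμ i).ne') hV00 hV0row hVcol hVdiag
      hVoff
  have hrows : ∀ (i : Fin M) j, (F * V⁻¹) i.succ j = 0 := fun i j => by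
    rw [mul_apply]
    exact Finset.sum_eq_zero fun k _ => by rw [hFrest, zero_mul]
  have hR0 : (F * V⁻¹) 0 0 = ∑ i, β0 i * ηv i / ((γ i + μ) * (η + μ)) := by
    rw [mul_apply, Fin.sum_univ_succ, hF00, zero_mul, zero_add]
    exact Finset.sum_congr rfl fun i _ => by rw [hF0row, hVinv, mul_div_assoc]
  rw [charpoly_of_row_succ_eq_zero hrows, hR0]

/-- The characteristic polynomial of the next-generation matrix `F·V⁻¹` of the
multi-variant SEIR model is `X^M · (X − ℛ₀)`; in particular its eigenvalues are
`0` (with multiplicity `M`) and `ℛ₀`. -/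
theorem next_generation_charpoly
    (M : ℕ) (hM : 1 ≤ M) (μ η : ℝ) (hμ : 0 ≤ μ)
    (β0 ηv γ : Fin M → ℝ) (hβ0 : ∀ i, 0 ≤ β0 i) (hηv : ∀ i, 0 ≤ ηv i)
    (hγ : ∀ i, 0 ≤ γ i) (hη : η = ∑ i, ηv i)
    (hημ : 0 < η + μ) (hγμ : ∀ i, 0 < γ i + μ)
    (F V : Matrix (Fin (M + 1)) (Fin (M + 1)) ℝ)
    (hF00 : F 0 0 = 0)
    (hF0row : ∀ j : Fin M, F 0 j.succ = β0 j)
    (hFrest : ∀ (i : Fin M) (j : Fin (M + 1)), F i.succ j = 0)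
    (hV00 : V 0 0 = η + μ)
    (hV0row : ∀ j : Fin M, V 0 j.succ = 0)
    (hVcol : ∀ i : Fin M, V i.succ 0 = -ηv i)
    (hVdiag : ∀ i : Fin M, V i.succ i.succ = γ i + μ)
    (hVoff : ∀ i j : Fin M, i ≠ j → V i.succ j.succ = 0) :
    (F * V⁻¹).charpoly =
      X ^ M * (X - C (∑ i, β0 i * ηv i / ((γ i + μ) * (η + μ)))) :=
  next_generation_charpoly_general M μ η β0 ηv γ hημ hγμ F V hF00 hF0row hFrest hV00 hV0row hVcol
    hVdiag hVoff
end

section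
/- With F and V as above and assuming η + μ > 0, γ_i + μ > 0, and β_i⁰ ≥ 0, η_i ≥ 0 for all i, the spectral radius of the next-generation matrix F·V⁻¹ equals ℛ₀ = Σ_{i=1}^M β_i⁰ η_i / ((γ_i + μ)(η + μ)). -/
/-!
Since only the first row of `F` is nonzero, so is only the first row of `F V⁻¹`; such a matrix is
upper triangular with diagonal `((F V⁻¹)₀₀, 0, …, 0)`, so its eigenvalues are `(F V⁻¹)₀₀` and `0`.
`V` is a lower triangular arrowhead matrix; solving `V x = e₀` gives the first column of `V⁻¹`,
whence `(F V⁻¹)₀₀ = Σᵢ βᵢ⁰ ηᵢ / ((γᵢ + μ)(η + μ)) = ℛ₀ ≥ 0`.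
-/

open Polynomial

namespace Matrix

variable {K : Type*} [Field K] {n : ℕ}

theorem charpoly_of_forall_succ_row_eq_zero {R : Type*} [CommRing R]
    (A : Matrix (Fin (n + 1)) (Fin (n + 1)) R) (hA : ∀ (i : Fin n) j, A i.succ j = 0) :
    A.charpoly = (X - C (A 0 0)) * X ^ n := by
  have hupper : A.IsUpperTriangular := by
    intro i j hji
    cases i using Fin.cases with
    | zero => exact absurd hji (Fin.not_lt_zero j)
    | succ i => exact hA i j
  simp [charpoly_of_isUpperTriangular A hupper, Fin.prod_univ_succ, hA]

theorem mem_spectrum_iff_of_forall_succ_row_eq_zero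
    {A : Matrix (Fin (n + 1)) (Fin (n + 1)) K} (hA : ∀ (i : Fin n) j, A i.succ j = 0) (z : K) :
    z ∈ spectrum K A ↔ (z - A 0 0) * z ^ n = 0 := by
  simp [mem_spectrum_iff_isRoot_charpoly, charpoly_of_forall_succ_row_eq_zero A hA]

theorem isUnit_det_of_isLowerTriangular_s8 {ι : Type*} [LinearOrder ι] [Fintype ι] {A : Matrix ι ι K}
    (hA : A.IsLowerTriangular) (hdiag : ∀ i, A i i ≠ 0) : IsUnit A.det := by
  simpa [det_of_isLowerTriangular A hA, Finset.prod_ne_zero_iff] using hdiag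

section Arrowhead

variable {V : Matrix (Fin (n + 1)) (Fin (n + 1)) K}

theorem isLowerTriangular_of_arrowhead (hrow : ∀ j : Fin n, V 0 j.succ = 0)
    (hoff : ∀ i j : Fin n, i ≠ j → V i.succ j.succ = 0) : V.IsLowerTriangular := by
  intro i j hij
  change i < j at hij
  cases j using Fin.cases with
  | zero => exact absurd hij (Fin.not_lt_zero i)
  | succ j =>
    cases i using Fin.cases with
    | zero => exact hrow j
    | succ i => exact hoff i j (Fin.succ_lt_succ_iff.1 hij).ne

theorem inv_succ_zero_of_arrowhead (hrow : ∀ j : Fin n, V 0 j.succ = 0)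
    (hoff : ∀ i j : Fin n, i ≠ j → V i.succ j.succ = 0) (h00 : V 0 0 ≠ 0)
    (hdiag : ∀ i : Fin n, V i.succ i.succ ≠ 0) (i : Fin n) :
    V⁻¹ i.succ 0 = -V i.succ 0 / (V i.succ i.succ * V 0 0) := by
  have hunit : IsUnit V.det := by
    refine isUnit_det_of_isLowerTriangular_s8 (isLowerTriangular_of_arrowhead hrow hoff) ?_
    intro k
    cases k using Fin.cases with
    | zero => exact h00
    | succ k => exact hdiag k
  let := V.invertibleOfIsUnitDet hunit
  set x : Fin (n + 1) → K :=
    Fin.cons (V 0 0)⁻¹ fun k => -V k.succ 0 / (V k.succ k.succ * V 0 0)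
  have hsolve : V *ᵥ x = Pi.single 0 1 := by
    ext k
    cases k using Fin.cases with
    | zero => simp [mulVec, dotProduct, Fin.sum_univ_succ, x, hrow, h00]
    | succ k =>
      have hsum : ∑ j : Fin n, V k.succ j.succ * x j.succ = V k.succ k.succ * x k.succ :=
        Finset.sum_eq_single k (fun j _ hjk => by rw [hoff k j hjk.symm, zero_mul])
          (by simp)
      rw [mulVec, dotProduct, Fin.sum_univ_succ, hsum]
      simp only [x, Fin.cons_zero, Fin.cons_succ]
      field_simp [hdiag k]
      simp [Fin.succ_ne_zero]
  simpa [mulVec_single_one, x] using congrFun (inv_mulVec_eq_vec hsolve.symm) i.succ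

end Arrowhead

end Matrix

theorem next_generation_spectral_radius_general
    (M : ℕ) (μ η : ℝ)
    (β0 ηv γ : Fin M → ℝ) (hβ0 : ∀ i, 0 ≤ β0 i) (hηv : ∀ i, 0 ≤ ηv i)
    (hημ : 0 < η + μ) (hγμ : ∀ i, 0 < γ i + μ)
    (F V : Matrix (Fin (M + 1)) (Fin (M + 1)) ℝ)
    (hF00 : F 0 0 = 0)
    (hF0row : ∀ j : Fin M, F 0 j.succ = β0 j)
    (hFrest : ∀ (i : Fin M) (j : Fin (M + 1)), F i.succ j = 0)
    (hV00 : V 0 0 = η + μ)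
    (hV0row : ∀ j : Fin M, V 0 j.succ = 0)
    (hVcol : ∀ i : Fin M, V i.succ 0 = -ηv i)
    (hVdiag : ∀ i : Fin M, V i.succ i.succ = γ i + μ)
    (hVoff : ∀ i j : Fin M, i ≠ j → V i.succ j.succ = 0) :
    IsGreatest
      {x : ℝ | ∃ zc ∈ spectrum ℂ ((F * V⁻¹).map (Complex.ofReal : ℝ → ℂ)),
        x = ‖zc‖}
      (∑ i, β0 i * ηv i / ((γ i + μ) * (η + μ))) := by
  set R0 := ∑ i, β0 i * ηv i / ((γ i + μ) * (η + μ))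
  have hR0 : 0 ≤ R0 := Finset.sum_nonneg fun i _ => by
    have := hβ0 i; have := hηv i; have := hγμ i; positivity
  have hentry : (F * V⁻¹) 0 0 = R0 := by
    rw [Matrix.mul_apply, Fin.sum_univ_succ, hF00, zero_mul, zero_add]
    refine Finset.sum_congr rfl fun i _ => ?_
    rw [hF0row, Matrix.inv_succ_zero_of_arrowhead hV0row hVoff (hV00 ▸ hημ.ne')
      (fun k => hVdiag k ▸ (hγμ k).ne'), hVcol, hVdiag, hV00, neg_neg, mul_div_assoc]
  have hspec (z : ℂ) :
      z ∈ spectrum ℂ ((F * V⁻¹).map Complex.ofReal) ↔ (z - R0) * z ^ M = 0 := by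
    rw [Matrix.mem_spectrum_iff_of_forall_succ_row_eq_zero
      (fun i j => by simp [Matrix.mul_apply, hFrest])]
    simp [hentry]
  refine ⟨⟨R0, (hspec R0).2 (by simp), by simp [abs_of_nonneg hR0]⟩, ?_⟩
  rintro x ⟨z, hz, rfl⟩
  rcases mul_eq_zero.1 ((hspec z).1 hz) with hR | h0
  · simp [sub_eq_zero.1 hR, abs_of_nonneg hR0]
  · simpa [(pow_eq_zero_iff'.1 h0).1] using hR0

/-- The spectral radius of the next-generation matrix `F·V⁻¹` — the maximum of
the moduli of its complex eigenvalues — equals the basic reproduction number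
`ℛ₀ = Σᵢ βᵢ⁰ ηᵢ / ((γᵢ + μ)(η + μ))`. -/
theorem next_generation_spectral_radius
    (M : ℕ) (hM : 1 ≤ M) (μ η : ℝ) (hμ : 0 ≤ μ)
    (β0 ηv γ : Fin M → ℝ) (hβ0 : ∀ i, 0 ≤ β0 i) (hηv : ∀ i, 0 ≤ ηv i)
    (hγ : ∀ i, 0 ≤ γ i) (hη : η = ∑ i, ηv i)
    (hημ : 0 < η + μ) (hγμ : ∀ i, 0 < γ i + μ)
    (F V : Matrix (Fin (M + 1)) (Fin (M + 1)) ℝ)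
    (hF00 : F 0 0 = 0)
    (hF0row : ∀ j : Fin M, F 0 j.succ = β0 j)
    (hFrest : ∀ (i : Fin M) (j : Fin (M + 1)), F i.succ j = 0)
    (hV00 : V 0 0 = η + μ)
    (hV0row : ∀ j : Fin M, V 0 j.succ = 0)
    (hVcol : ∀ i : Fin M, V i.succ 0 = -ηv i)
    (hVdiag : ∀ i : Fin M, V i.succ i.succ = γ i + μ)
    (hVoff : ∀ i j : Fin M, i ≠ j → V i.succ j.succ = 0) :
    IsGreatest
      {x : ℝ | ∃ zc ∈ spectrum ℂ ((F * V⁻¹).map (Complex.ofReal : ℝ → ℂ)),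
        x = ‖zc‖}
      (∑ i, β0 i * ηv i / ((γ i + μ) * (η + μ))) :=
  next_generation_spectral_radius_general M μ η β0 ηv γ hβ0 hηv hημ hγμ F V hF00 hF0row hFrest hV00
    hV0row hVcol hVdiag hVoff
end

section
/- For M = 1, let J be the 4 × 4 real matrix J = [[−(ν+μ), 0, −β₁⁰, 0], [0, −(η₁+μ), β₁⁰, 0], [0, η₁, −(γ₁+μ), 0], [ν, 0, γ₁, −μ]] (the Jacobian of the single-variant SEIR system at the disease-free equilibrium). Set A = √(4β₁⁰η₁ + (η₁ − γ₁)²) and B = η₁ + 2μ + γ₁, and assume β₁⁰, η₁ ≥ 0. Then the characteristic polynomial of J factors as (X + μ)(X + ν + μ)(X − (−A − B)/2)(X − (A − B)/2); equivalently, the eigenvalues of J are λ₁ = −μ, λ₂ = −(ν+μ), λ₃ = (−A − B)/2, and λ₄ = (A − B)/2. -/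
/-!
The `R` column of `J` vanishes off the diagonal and the `S` column does so away from the
`S` and `R` rows, so the characteristic polynomial splits off the factors `X + μ` and
`X + (ν + μ)`, leaving that of the exposed–infected block `!![-(η₁ + μ), β₁; η₁, -(γ₁ + μ)]`.
That block has trace `-B` and discriminant `(η₁ - γ₁)² + 4 β₁ η₁ = A²`, so its eigenvalues
are `(-B ∓ A) / 2`.
-/

open Polynomial

namespace Matrix

variable {K : Type*} [Field K] [NeZero (2 : K)]

theorem charpoly_fin_two_eq_of_discr_eq_mul_self (M : Matrix (Fin 2) (Fin 2) K) {s : K}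
    (hs : M.discr = s * s) :
    M.charpoly = (X - C ((M.trace - s) / 2)) * (X - C ((M.trace + s) / 2)) := by
  rw [discr_fin_two] at hs
  have hsum : C M.trace = C ((M.trace - s) / 2) + C ((M.trace + s) / 2) := by
    rw [← C_add]
    congr 1
    field_simp
    ring
  have hprod : M.det = (M.trace - s) / 2 * ((M.trace + s) / 2) := by
    field_simp
    linear_combination -hs
  rw [charpoly_fin_two, hsum, hprod, C_mul]
  ring

end Matrix

theorem charpoly_seir_jacobian {R : Type*} [CommRing R] (μ ν η γ β : R) :
    (!![-(ν + μ), 0, -β, 0;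
        0, -(η + μ), β, 0;
        0, η, -(γ + μ), 0;
        ν, 0, γ, -μ] : Matrix (Fin 4) (Fin 4) R).charpoly =
      (X + C μ) * (X + C (ν + μ)) * (!![-(η + μ), β; η, -(γ + μ)] : Matrix (Fin 2) (Fin 2) R).charpoly := by
  simp [Matrix.charpoly, Matrix.det_succ_row_zero, Fin.sum_univ_succ, Matrix.charmatrix_apply,
    Fin.succAbove, Matrix.diagonal]
  ring

theorem single_variant_jacobian_charpoly_general
    (μ ν η₁ γ₁ β₁ : ℝ)
    (hβ₁ : 0 ≤ β₁) (hη₁ : 0 ≤ η₁)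
    (A B : ℝ) (hA : A = Real.sqrt (4 * β₁ * η₁ + (η₁ - γ₁) ^ 2))
    (hB : B = η₁ + 2 * μ + γ₁)
    (J : Matrix (Fin 4) (Fin 4) ℝ)
    (hJ : J = !![-(ν + μ), 0, -β₁, 0;
                 0, -(η₁ + μ), β₁, 0;
                 0, η₁, -(γ₁ + μ), 0;
                 ν, 0, γ₁, -μ]) :
    J.charpoly =
      (X + C μ) * (X + C (ν + μ)) * (X - C ((-A - B) / 2)) * (X - C ((A - B) / 2)) := by
  set K : Matrix (Fin 2) (Fin 2) ℝ := !![-(η₁ + μ), β₁; η₁, -(γ₁ + μ)]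
  have hK_trace : K.trace = -B := by rw [Matrix.trace_fin_two_of, hB]; ring
  have hK_discr : K.discr = A * A := by
    rw [Matrix.discr_fin_two, Matrix.trace_fin_two_of, Matrix.det_fin_two_of, hA,
      Real.mul_self_sqrt (by positivity)]
    ring
  rw [hJ, charpoly_seir_jacobian, K.charpoly_fin_two_eq_of_discr_eq_mul_self hK_discr, hK_trace,
    show -B - A = -A - B by ring, show -B + A = A - B by ring]
  ring

/-- Factorization of the characteristic polynomial of the Jacobian of the
single-variant (M = 1) SEIR system at the disease-free equilibrium; equivalently
the eigenvalues are `−μ`, `−(ν+μ)`, `(−A−B)/2` and `(A−B)/2`. -/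
theorem single_variant_jacobian_charpoly
    (μ ν η₁ γ₁ β₁ : ℝ) (hμ : 0 ≤ μ) (hν : 0 ≤ ν) (hγ₁ : 0 ≤ γ₁)
    (hβ₁ : 0 ≤ β₁) (hη₁ : 0 ≤ η₁)
    (A B : ℝ) (hA : A = Real.sqrt (4 * β₁ * η₁ + (η₁ - γ₁) ^ 2))
    (hB : B = η₁ + 2 * μ + γ₁)
    (J : Matrix (Fin 4) (Fin 4) ℝ)
    (hJ : J = !![-(ν + μ), 0, -β₁, 0;
                 0, -(η₁ + μ), β₁, 0;
                 0, η₁, -(γ₁ + μ), 0;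
                 ν, 0, γ₁, -μ]) :
    J.charpoly =
      (X + C μ) * (X + C (ν + μ)) * (X - C ((-A - B) / 2)) * (X - C ((A - B) / 2)) :=
  single_variant_jacobian_charpoly_general μ ν η₁ γ₁ β₁ hβ₁ hη₁ A B hA hB J hJ
end

section
/- Let μ > 0, ν > 0, η₁ > 0, γ₁ > 0, β₁⁰ > 0, and set A = √(4β₁⁰η₁ + (η₁ − γ₁)²) and B = η₁ + 2μ + γ₁. If β₁⁰η₁ < (γ₁ + μ)(η₁ + μ) (i.e., the basic reproduction number ℛ₀ = β₁⁰η₁/((γ₁+μ)(η₁+μ)) satisfies ℛ₀ < 1), then A < B, and consequently all four quantities −μ, −(ν+μ), (−A − B)/2, and (A − B)/2 are strictly negative. -/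
/-- If `ℛ₀ < 1` for the single-variant SEIR model, then `A < B` and all four
eigenvalues of the Jacobian at the disease-free equilibrium are negative. -/
theorem single_variant_eigenvalues_negative
    (μ ν η₁ γ₁ β₁ : ℝ) (hμ : 0 < μ) (hν : 0 < ν) (hη₁ : 0 < η₁)
    (hγ₁ : 0 < γ₁) (hβ₁ : 0 < β₁)
    (A B : ℝ) (hA : A = Real.sqrt (4 * β₁ * η₁ + (η₁ - γ₁) ^ 2))
    (hB : B = η₁ + 2 * μ + γ₁)
    (hR0 : β₁ * η₁ < (γ₁ + μ) * (η₁ + μ)) :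
    A < B ∧ -μ < 0 ∧ -(ν + μ) < 0 ∧ (-A - B) / 2 < 0 ∧ (A - B) / 2 < 0 := by
  have hBpos : 0 < B := by rw [hB]; linarith
  have hAB : A < B := by
    rw [hA, show B = Real.sqrt (B ^ 2) from (Real.sqrt_sq hBpos.le).symm]
    apply Real.sqrt_lt_sqrt (by positivity)
    rw [hB]; nlinarith
  have hA0 : 0 ≤ A := hA ▸ Real.sqrt_nonneg _
  refine ⟨hAB, by linarith, by linarith, by linarith, by linarith⟩
end

section
/- Let M ≥ 1 and let J be the (M+3) × (M+3) real matrix (the Jacobian of the multi-variant SEIR system at the disease-free equilibrium) given in block form by: J_{1,1} = −(ν+μ); J_{1, i+2} = −β_i⁰ for i = 1,…,M; J_{2,2} = −(η+μ); J_{2, i+2} = β_i⁰ for i = 1,…,M; J_{i+2, 2} = η_i and J_{i+2, i+2} = −(γ_i+μ) for i = 1,…,M; J_{M+3, 1} = ν; J_{M+3, i+2} = γ_i for i = 1,…,M; J_{M+3, M+3} = −μ; and all other entries zero. Assume μ > 0, ν > 0, β_i⁰ > 0, η_i > 0, γ_i > 0 for all i, where η = Σ_{i=1}^M η_i. If ℛ₀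 = Σ_{i=1}^M β_i⁰ η_i / ((γ_i + μ)(η + μ)) < 1, then every complex eigenvalue of J has strictly negative real part. -/
/-!
Take an eigenvector `v` of `J` for an eigenvalue `z` with `Re z ≥ 0`. The rows of the exposed
and infected compartments only involve those compartments, and eliminating `I_i` gives the
characteristic equation `z + η + μ = ∑ β_i⁰ η_i / (z + γ_i + μ)` whenever `E ≠ 0`. For `Re z ≥ 0`
the right-hand side has modulus at most `∑ β_i⁰ η_i / (γ_i + μ) = ℛ₀ (η + μ) < η + μ`, while the
left-hand side has modulus at least `η + μ`; so `v` vanishes on the infected compartments. The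
remaining rows are then triangular with diagonal `-(ν + μ)` and `-μ`, forcing `v = 0`.
-/
open Finset Matrix

theorem sum_fin_add_three {α : Type*} [AddCommMonoid α] {M : ℕ} (f : Fin (M + 3) → α) :
    ∑ k, f k = f 0 + f 1 + ∑ i : Fin M, f i.succ.succ.castSucc + f (Fin.last (M + 2)) := by
  rw [Fin.sum_univ_castSucc, Fin.sum_univ_succ, Fin.sum_univ_succ, ← add_assoc]
  rfl

theorem eq_zero_of_fin_add_three {α : Type*} [Zero α] {M : ℕ} {f : Fin (M + 3) → α}
    (h0 : f 0 = 0) (h1 : f 1 = 0) (hI : ∀ i : Fin M, f i.succ.succ.castSucc = 0)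
    (hR : f (Fin.last (M + 2)) = 0) : f = 0 := by
  funext k
  induction k using Fin.lastCases with
  | last => exact hR
  | cast k =>
    induction k using Fin.cases with
    | zero => exact h0
    | succ k =>
      induction k using Fin.cases with
      | zero => exact h1
      | succ i => exact hI i

theorem exists_mulVec_eq_smul_of_mem_spectrum {n K : Type*} [Fintype n] [DecidableEq n]
    [Field K] {A : Matrix n n K} {z : K} (hz : z ∈ spectrum K A) : ∃ v ≠ 0, A *ᵥ v = z • v := by
  rw [← Matrix.spectrum_toLin', ← Module.End.hasEigenvalue_iff_mem_spectrum] at hz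
  obtain ⟨v, hv, hv0⟩ := hz.exists_hasEigenvector
  exact ⟨v, hv0, Module.End.mem_eigenspace_iff.mp hv⟩

theorem le_norm_add_ofReal {z : ℂ} (hz : 0 ≤ z.re) (c : ℝ) : c ≤ ‖z + c‖ :=
  calc c ≤ (z + c).re := by simp [hz]
    _ ≤ ‖z + c‖ := Complex.re_le_norm _

theorem add_ofReal_ne_zero {z : ℂ} (hz : 0 ≤ z.re) {c : ℝ} (hc : 0 < c) : z + c ≠ 0 :=
  norm_pos_iff.mp (hc.trans_le (le_norm_add_ofReal hz c))

theorem eq_zero_of_neg_ofReal_mul_eq {z : ℂ} (hz : 0 ≤ z.re) {c : ℝ} (hc : 0 < c) {x : ℂ}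
    (h : ((-c : ℝ) : ℂ) * x = z * x) : x = 0 :=
  (mul_eq_zero.mp (by push_cast at h; linear_combination -h : (z + c) * x = 0)).resolve_left
    (add_ofReal_ne_zero hz hc)

theorem norm_sum_div_add_ofReal_lt {ι : Type*} [Fintype ι] {z : ℂ} (hz : 0 ≤ z.re) {a : ℝ}
    (ha : 0 < a) {k c : ι → ℝ} (hk : ∀ i, 0 ≤ k i) (hc : ∀ i, 0 < c i)
    (hR : ∑ i, k i / (c i * a) < 1) :
    ‖∑ i, (k i : ℂ) / (z + c i)‖ < ‖z + a‖ :=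
  calc ‖∑ i, (k i : ℂ) / (z + c i)‖ ≤ ∑ i, k i / c i := by
        refine (norm_sum_le _ _).trans (sum_le_sum fun i _ => ?_)
        rw [norm_div, Complex.norm_of_nonneg (hk i)]
        exact div_le_div_of_nonneg_left (hk i) (hc i) (le_norm_add_ofReal hz _)
    _ = (∑ i, k i / (c i * a)) * a := by
        rw [sum_mul]
        refine sum_congr rfl fun i _ => ?_
        field_simp [(hc i).ne']
    _ < 1 * a := mul_lt_mul_of_pos_right hR ha
    _ = a := one_mul a
    _ ≤ ‖z + a‖ := le_norm_add_ofReal hz a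

theorem infected_eq_zero_of_re_nonneg {ι : Type*} [Fintype ι] {z : ℂ} (hz : 0 ≤ z.re) {a : ℝ}
    (ha : 0 < a) {β η c : ι → ℝ} (hβ : ∀ i, 0 ≤ β i) (hη : ∀ i, 0 ≤ η i) (hc : ∀ i, 0 < c i)
    (hR : ∑ i, β i * η i / (c i * a) < 1) {e : ℂ} {w : ι → ℂ}
    (hE : (z + a) * e = ∑ i, β i * w i) (hI : ∀ i, (z + c i) * w i = η i * e) :
    e = 0 ∧ ∀ i, w i = 0 := by
  have hzc i : z + c i ≠ 0 := add_ofReal_ne_zero hz (hc i)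
  have he : e = 0 := by
    by_contra he
    have hchar : z + a = ∑ i, ((β i * η i : ℝ) : ℂ) / (z + c i) := by
      refine mul_right_cancel₀ he (hE.trans ?_)
      rw [sum_mul]
      refine sum_congr rfl fun i _ => ?_
      rw [div_mul_eq_mul_div, eq_div_iff (hzc i)]
      push_cast
      linear_combination (β i : ℂ) * hI i
    exact (norm_sum_div_add_ofReal_lt hz ha (fun i => mul_nonneg (hβ i) (hη i)) hc hR).ne
      (congrArg norm hchar).symm
  refine ⟨he, fun i => ?_⟩
  simpa [he, hzc i] using hI i

theorem seir_disease_free_equilibrium_stable_general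
    (M : ℕ) (μ ν η : ℝ) (hμ : 0 < μ) (hν : 0 < ν)
    (β0 ηv γ : Fin M → ℝ) (hβ0 : ∀ i, 0 < β0 i) (hηv : ∀ i, 0 < ηv i)
    (hγ : ∀ i, 0 < γ i) (hη : η = ∑ i, ηv i)
    (J : Matrix (Fin (M + 3)) (Fin (M + 3)) ℝ)
    (hJ00 : J 0 0 = -(ν + μ))
    (hJ0R : J 0 (Fin.last (M + 2)) = 0)
    (hJ10 : J 1 0 = 0)
    (hJ11 : J 1 1 = -(η + μ))
    (hJ1I : ∀ i : Fin M, J 1 i.succ.succ.castSucc = β0 i)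
    (hJ1R : J 1 (Fin.last (M + 2)) = 0)
    (hJI0 : ∀ i : Fin M, J i.succ.succ.castSucc 0 = 0)
    (hJI1 : ∀ i : Fin M, J i.succ.succ.castSucc 1 = ηv i)
    (hJII : ∀ i j : Fin M, J i.succ.succ.castSucc j.succ.succ.castSucc =
      if i = j then -(γ i + μ) else 0)
    (hJIR : ∀ i : Fin M, J i.succ.succ.castSucc (Fin.last (M + 2)) = 0)
    (hJRR : J (Fin.last (M + 2)) (Fin.last (M + 2)) = -μ)
    (hR0 : (∑ i, β0 i * ηv i / ((γ i + μ) * (η + μ))) < 1) :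
    ∀ zc ∈ spectrum ℂ (J.map (Complex.ofReal : ℝ → ℂ)), zc.re < 0 := by
  intro z hz
  by_contra! hre
  obtain ⟨v, hv0, hJv⟩ := exists_mulVec_eq_smul_of_mem_spectrum hz
  have row k := congrFun hJv k
  simp only [mulVec, dotProduct, sum_fin_add_three, map_apply, Pi.smul_apply, smul_eq_mul] at row
  have hημ : 0 < η + μ := by
    have : 0 ≤ η := hη ▸ sum_nonneg fun i _ => (hηv i).le
    linarith
  have rowE := row 1
  simp only [hJ10, hJ11, hJ1I, hJ1R, Complex.ofReal_zero, zero_mul, zero_add, add_zero] at rowE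
  have rowI (i : Fin M) := row i.succ.succ.castSucc
  simp only [hJI0, hJI1, hJII, hJIR, Complex.ofReal_zero, zero_mul, zero_add, add_zero,
    apply_ite Complex.ofReal, ite_mul, sum_ite_eq, mem_univ, if_true] at rowI
  obtain ⟨hE, hI⟩ := infected_eq_zero_of_re_nonneg (e := v 1)
    (w := fun i => v i.succ.succ.castSucc) hre hημ (fun i => (hβ0 i).le) (fun i => (hηv i).le)
    (fun i => add_pos (hγ i) hμ) hR0
    (by push_cast at rowE ⊢; linear_combination -rowE)
    (fun i => by push_cast at rowI ⊢; linear_combination -rowI i)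
  have hS : v 0 = 0 := eq_zero_of_neg_ofReal_mul_eq hre (add_pos hν hμ) <| by
    simpa only [hJ00, hJ0R, hE, hI, mul_zero, sum_const_zero, add_zero, Complex.ofReal_zero,
      zero_mul] using row 0
  have hR : v (Fin.last (M + 2)) = 0 := eq_zero_of_neg_ofReal_mul_eq hre hμ <| by
    simpa only [hJRR, hS, hE, hI, mul_zero, sum_const_zero, add_zero, zero_add] using
      row (Fin.last (M + 2))
  exact hv0 (eq_zero_of_fin_add_three hS hE hI hR)

/-- Local asymptotic stability of the disease-free equilibrium of the
multi-variant SEIR model: if `ℛ₀ < 1`, every complex eigenvalue of the Jacobian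
at the disease-free equilibrium has strictly negative real part. -/
theorem seir_disease_free_equilibrium_stable
    (M : ℕ) (hM : 1 ≤ M) (μ ν η : ℝ) (hμ : 0 < μ) (hν : 0 < ν)
    (β0 ηv γ : Fin M → ℝ) (hβ0 : ∀ i, 0 < β0 i) (hηv : ∀ i, 0 < ηv i)
    (hγ : ∀ i, 0 < γ i) (hη : η = ∑ i, ηv i)
    (J : Matrix (Fin (M + 3)) (Fin (M + 3)) ℝ)
    (hJ00 : J 0 0 = -(ν + μ))
    (hJ01 : J 0 1 = 0)
    (hJ0I : ∀ i : Fin M, J 0 i.succ.succ.castSucc = -β0 i)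
    (hJ0R : J 0 (Fin.last (M + 2)) = 0)
    (hJ10 : J 1 0 = 0)
    (hJ11 : J 1 1 = -(η + μ))
    (hJ1I : ∀ i : Fin M, J 1 i.succ.succ.castSucc = β0 i)
    (hJ1R : J 1 (Fin.last (M + 2)) = 0)
    (hJI0 : ∀ i : Fin M, J i.succ.succ.castSucc 0 = 0)
    (hJI1 : ∀ i : Fin M, J i.succ.succ.castSucc 1 = ηv i)
    (hJII : ∀ i j : Fin M, J i.succ.succ.castSucc j.succ.succ.castSucc =
      if i = j then -(γ i + μ) else 0)
    (hJIR : ∀ i : Fin M, J i.succ.succ.castSucc (Fin.last (M + 2)) = 0)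
    (hJR0 : J (Fin.last (M + 2)) 0 = ν)
    (hJR1 : J (Fin.last (M + 2)) 1 = 0)
    (hJRI : ∀ i : Fin M, J (Fin.last (M + 2)) i.succ.succ.castSucc = γ i)
    (hJRR : J (Fin.last (M + 2)) (Fin.last (M + 2)) = -μ)
    (hR0 : (∑ i, β0 i * ηv i / ((γ i + μ) * (η + μ))) < 1) :
    ∀ zc ∈ spectrum ℂ (J.map (Complex.ofReal : ℝ → ℂ)), zc.re < 0 :=
  seir_disease_free_equilibrium_stable_general M μ ν η hμ hν β0 ηv γ hβ0 hηv hγ hη J hJ00 hJ0R hJ10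
    hJ11 hJ1I hJ1R hJI0 hJI1 hJII hJIR hJRR hR0
end
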